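/- For the path graph P_n on n ≥ 2 vertices, the 2-pebbling number with support size n − 1 satisfies π₂(P_n, n − 1) = 2^{n−1} + n; in particular π₂(P_n, n − 1) ≤ 2·π(P_n) = 2^n. -/

import Mathlib

open SimpleGraph Finset

/-- A single pebbling move on `G`: remove two pebbles from a vertex `v` with at least two
pebbles and add one pebble to an adjacent vertex `w`. -/
def PebblingMove {V : Type*} (G : SimpleGraph V) (c c' : V → ℕ) : Prop :=
  ∃ v w, G.Adj v w ∧ 2 ≤ c v ∧ c' v = c v - 2 ∧ c' w = c w + 1 ∧
    ∀ u, u ≠ v → u ≠ w → c' u = c u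

/-- Some finite sequence of pebbling moves starting from `c` places at least `t` pebbles
on the vertex `r`. -/
def NSolvable {V : Type*} (G : SimpleGraph V) (c : V → ℕ) (r : V) (t : ℕ) : Prop :=
  ∃ c', Relation.ReflTransGen (PebblingMove G) c c' ∧ t ≤ c' r

/-- A configuration `c` is `r`-solvable. -/
def Solvable {V : Type*} (G : SimpleGraph V) (c : V → ℕ) (r : V) : Prop :=
  NSolvable G c r 1

/-- The pebbling number `π(G)`: least `k` such that every configuration of size `k` is
`r`-solvable for every root `r`. -/
noncomputable def pebblingNumber {V : Type*} (G : SimpleGraph V) [Fintype V] : ℕ :=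
  sInf {k | ∀ c : V → ℕ, (∑ v, c v) = k → ∀ r, Solvable G c r}

/-- The 2-pebbling number `π₂(G, s)`: least `m` such that for every root `r`, every
configuration of size at least `m` with support of size exactly `s` can place two pebbles
on `r`. -/
noncomputable def twoPebblingNumber {V : Type*} (G : SimpleGraph V) [Fintype V] (s : ℕ) : ℕ :=
  sInf {m | ∀ (r : V) (c : V → ℕ), m ≤ ∑ v, c v →
    (Finset.univ.filter fun v => 1 ≤ c v).card = s → NSolvable G c r 2}

namespace Stmt17

lemma moveMany {V : Type*} [DecidableEq V] (G : SimpleGraph V) {v w : V} (h : G.Adj v w) :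
    ∀ k (c : V → ℕ), c v = k → ∃ c',
      Relation.ReflTransGen (PebblingMove G) c c' ∧
      c' w = c w + c v / 2 ∧ ∀ u, u ≠ v → u ≠ w → c' u = c u := by
  intro k
  induction k using Nat.strong_induction_on with
  | _ k ih =>
    intro c hc
    by_cases h2 : 2 ≤ c v
    · have hne : v ≠ w := h.ne
      set c₁ : V → ℕ := fun u => if u = v then c v - 2 else if u = w then c w + 1 else c u
        with hc₁
      have hmove : PebblingMove G c c₁ := by
        refine ⟨v, w, h, h2, ?_, ?_, ?_⟩
        · simp [hc₁]
        · simp [hc₁, hne.symm]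
        · intro u hu1 hu2; simp [hc₁, hu1, hu2]
      have hc₁v : c₁ v = k - 2 := by simp [hc₁, hc]
      obtain ⟨c', hr, hw', hu'⟩ := ih (k - 2) (by omega) c₁ hc₁v
      refine ⟨c', Relation.ReflTransGen.head hmove hr, ?_, ?_⟩
      · have h1 : c₁ w = c w + 1 := by simp [hc₁, hne.symm]
        have h2' : c₁ v = c v - 2 := by simp [hc₁]
        rw [hw', h1, h2']
        omega
      · intro u hu1 hu2
        rw [hu' u hu1 hu2]
        simp [hc₁, hu1, hu2]
    · have : c v / 2 = 0 := by omega
      exact ⟨c, Relation.ReflTransGen.refl, by omega, fun u _ _ => rfl⟩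

variable {n : ℕ}

/-- extend a `Fin n`-configuration to `ℕ`. -/
def dd (n : ℕ) (c : Fin n → ℕ) (i : ℕ) : ℕ := if h : i < n then c ⟨i, h⟩ else 0

lemma sum_dd (c : Fin n → ℕ) : ∑ v, c v = ∑ i ∈ Finset.range n, dd n c i := by
  rw [Finset.sum_range fun i => dd n c i]
  refine Finset.sum_congr rfl fun i _ => ?_
  simp [dd, i.isLt]

lemma adj_path {i : ℕ} (h : i + 1 < n) :
    (pathGraph n).Adj ⟨i, by omega⟩ ⟨i + 1, h⟩ := by
  rw [pathGraph_adj]; left; rfl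

lemma ne_mk {n : ℕ} {u : Fin n} {j : ℕ} (h : j < n) (hne : u.val ≠ j) : u ≠ ⟨j, h⟩ := by
  simp [Fin.ext_iff, hne]

lemma sweepLeft (c : Fin n → ℕ) (r : ℕ) (hr : r < n) :
    ∃ c', Relation.ReflTransGen (PebblingMove (pathGraph n)) c c' ∧
      (∑ i ∈ Finset.range (r + 1), dd n c i * 2 ^ i) / 2 ^ r ≤ c' ⟨r, hr⟩ ∧
      ∀ u : Fin n, r < u.val → c' u = c u := by
  induction r with
  | zero =>
    refine ⟨c, Relation.ReflTransGen.refl, ?_, fun u _ => rfl⟩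
    simp [dd, hr]
  | succ j ihj =>
    obtain ⟨c₁, hr1, hval1, hun1⟩ := ihj (by omega)
    obtain ⟨c₂, hr2, hw2, hu2⟩ :=
      moveMany (pathGraph n) (adj_path hr) (c₁ ⟨j, by omega⟩) c₁ rfl
    refine ⟨c₂, hr1.trans hr2, ?_, ?_⟩
    · rw [Finset.sum_range_succ]
      have hdc : dd n c (j + 1) = c₁ ⟨j + 1, hr⟩ := by
        rw [hun1 _ (by simp)]; simp [dd, hr]
      calc (∑ i ∈ Finset.range (j + 1), dd n c i * 2 ^ i + dd n c (j+1) * 2 ^ (j+1)) / 2 ^ (j+1)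
          = dd n c (j+1) + (∑ i ∈ Finset.range (j + 1), dd n c i * 2 ^ i) / 2 ^ (j+1) := by
            rw [Nat.add_mul_div_right _ _ (by positivity), Nat.add_comm]
        _ = dd n c (j+1) + (∑ i ∈ Finset.range (j + 1), dd n c i * 2 ^ i) / 2 ^ j / 2 := by
            rw [Nat.div_div_eq_div_mul, pow_succ]
        _ ≤ c₁ ⟨j + 1, hr⟩ + c₁ ⟨j, by omega⟩ / 2 := by
            rw [hdc]; exact Nat.add_le_add_left (Nat.div_le_div_right hval1) _
        _ ≤ c₂ ⟨j + 1, hr⟩ := by rw [hw2]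
    · intro u hu
      rw [hu2 u (ne_mk _ (by omega)) (ne_mk _ (by omega)), hun1 u (by omega)]

lemma sweepRight (m : ℕ) : ∀ (j : ℕ) (hj : j < n), n - j = m → ∀ c : Fin n → ℕ,
    ∃ c', Relation.ReflTransGen (PebblingMove (pathGraph n)) c c' ∧
      c ⟨j, hj⟩ + (∑ i ∈ Finset.Ico (j + 1) n, dd n c i * 2 ^ (n - 1 - i)) / 2 ^ (n - 1 - j)
        ≤ c' ⟨j, hj⟩ ∧
      ∀ u : Fin n, u.val < j → c' u = c u := by
  induction m with
  | zero => intro j hj hm; omega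
  | succ m ih =>
    intro j hj hm c
    by_cases hjn : j + 1 < n
    · obtain ⟨c₁, hr1, hval1, hun1⟩ := ih (j + 1) hjn (by omega) c
      obtain ⟨c₂, hr2, hw2, hu2⟩ :=
        moveMany (pathGraph n) (adj_path hjn).symm (c₁ ⟨j + 1, hjn⟩) c₁ rfl
      refine ⟨c₂, hr1.trans hr2, ?_, ?_⟩
      · rw [Finset.sum_eq_sum_Ico_succ_bot hjn]
        have key : (dd n c (j+1) * 2 ^ (n - 1 - (j+1)) +
              ∑ i ∈ Finset.Ico (j+1+1) n, dd n c i * 2 ^ (n - 1 - i)) / 2 ^ (n - 1 - j)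
            ≤ c₁ ⟨j + 1, hjn⟩ / 2 := by
          have h1 : n - 1 - j = (n - 1 - (j + 1)) + 1 := by omega
          rw [h1, pow_succ, ← Nat.div_div_eq_div_mul, Nat.add_comm,
            Nat.add_mul_div_right _ _ (by positivity : (0:ℕ) < 2 ^ (n - 1 - (j+1)))]
          have : dd n c (j + 1) = c ⟨j + 1, hjn⟩ := by simp [dd, hjn]
          rw [Nat.add_comm, this]
          exact Nat.div_le_div_right hval1
        calc c ⟨j, hj⟩ + _ / 2 ^ (n - 1 - j)
            ≤ c₁ ⟨j, hj⟩ + c₁ ⟨j + 1, hjn⟩ / 2 := by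
              rw [hun1 _ (by simp)]
              exact Nat.add_le_add_left key _
          _ ≤ c₂ ⟨j, hj⟩ := by rw [hw2]
      · intro u hu
        rw [hu2 u (ne_mk _ (by omega)) (ne_mk _ (by omega)), hun1 u (by omega)]
    · have hj' : j = n - 1 := by omega
      refine ⟨c, Relation.ReflTransGen.refl, ?_, fun u _ => rfl⟩
      have : Finset.Ico (j + 1) n = ∅ := by
        rw [Finset.Ico_eq_empty_iff]; omega
      simp [this]

lemma path_collect (c : Fin n → ℕ) (r : Fin n) :
    NSolvable (pathGraph n) c r
      ((∑ i ∈ Finset.range (r.val + 1), dd n c i * 2 ^ i) / 2 ^ r.val +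
       (∑ i ∈ Finset.Ico (r.val + 1) n, dd n c i * 2 ^ (n - 1 - i)) / 2 ^ (n - 1 - r.val)) := by
  obtain ⟨c₁, hr1, hval1, hun1⟩ := sweepLeft c r.val r.isLt
  obtain ⟨c₂, hr2, hval2, _⟩ := sweepRight (n - r.val) r.val r.isLt (by omega) c₁
  have hdd : (∑ i ∈ Finset.Ico (r.val + 1) n, dd n c₁ i * 2 ^ (n-1-i))
      = ∑ i ∈ Finset.Ico (r.val + 1) n, dd n c i * 2 ^ (n-1-i) := by
    refine Finset.sum_congr rfl fun i hi => ?_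
    rw [Finset.mem_Ico] at hi
    have : dd n c₁ i = dd n c i := by
      simp only [dd, dif_pos hi.2]
      exact hun1 _ (by simp only [Fin.val_mk]; omega)
    rw [this]
  refine ⟨c₂, hr1.trans hr2, ?_⟩
  simp only [Fin.eta] at hval1 hval2
  rw [hdd] at hval2
  omega

end Stmt17

namespace Part2
open Stmt17

variable {n : ℕ}

def wt (n : ℕ) (c : Fin n → ℕ) : ℕ := ∑ i : Fin n, c i * 2 ^ (n - 1 - i.val)

lemma wt_move {c c' : Fin n → ℕ} (h : PebblingMove (pathGraph n) c c') : wt n c' ≤ wt n c := by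
  obtain ⟨v, w, hadj, h2, hv, hw, ho⟩ := h
  have hvw : v ≠ w := hadj.ne
  have hsum : ∀ f : Fin n → ℕ, ∑ i : Fin n, f i
      = f v + (f w + ∑ i ∈ (Finset.univ.erase v).erase w, f i) := by
    intro f
    rw [← Finset.add_sum_erase _ f (Finset.mem_univ v),
      ← Finset.add_sum_erase _ f (Finset.mem_erase.mpr ⟨hvw.symm, Finset.mem_univ w⟩)]
  have hS : ∑ i ∈ (Finset.univ.erase v).erase w, c' i * 2 ^ (n - 1 - i.val)
      = ∑ i ∈ (Finset.univ.erase v).erase w, c i * 2 ^ (n - 1 - i.val) := by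
    refine Finset.sum_congr rfl fun i hi => ?_
    rw [Finset.mem_erase, Finset.mem_erase] at hi
    rw [ho i hi.2.1 hi.1]
  have hBA : 2 ^ (n - 1 - w.val) ≤ 2 * 2 ^ (n - 1 - v.val) := by
    rcases pathGraph_adj.mp hadj with h1 | h1
    · have h0 : n - 1 - w.val ≤ n - 1 - v.val := by omega
      have := Nat.pow_le_pow_right (by norm_num : 1 ≤ 2) h0
      omega
    · have hv1 : n - 1 - w.val = (n - 1 - v.val) + 1 := by
        have := v.isLt; omega
      rw [hv1, pow_succ]; omega
  have e1 := hsum (fun i => c' i * 2 ^ (n - 1 - i.val))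
  have e2 := hsum (fun i => c i * 2 ^ (n - 1 - i.val))
  rw [hS] at e1
  have hsub : c' v * 2 ^ (n - 1 - v.val) + 2 * 2 ^ (n - 1 - v.val)
      = c v * 2 ^ (n - 1 - v.val) := by
    rw [hv, ← Nat.add_mul, Nat.sub_add_cancel h2]
  have hadd : c' w * 2 ^ (n - 1 - w.val) = c w * 2 ^ (n - 1 - w.val) + 2 ^ (n - 1 - w.val) := by
    rw [hw, Nat.add_mul, one_mul]
  rw [wt, wt, e1, e2]
  omega

lemma wt_rtg {c c' : Fin n → ℕ}
    (h : Relation.ReflTransGen (PebblingMove (pathGraph n)) c c') : wt n c' ≤ wt n c := by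
  induction h with
  | refl => exact le_rfl
  | tail _ hstep ih => exact (wt_move hstep).trans ih

lemma not_nsolvable (hn : 0 < n) (c : Fin n → ℕ) (t : ℕ) (hw : wt n c < t * 2 ^ (n - 1)) :
    ¬ NSolvable (pathGraph n) c ⟨0, hn⟩ t := by
  rintro ⟨c', hr, ht⟩
  have h1 : t * 2 ^ (n - 1) ≤ c' ⟨0, hn⟩ * 2 ^ (n - 1 - ((⟨0, hn⟩ : Fin n)).val) := by
    simp only [Fin.val_mk, Nat.sub_zero]
    exact Nat.mul_le_mul_right _ ht
  have h2 : c' ⟨0, hn⟩ * 2 ^ (n - 1 - ((⟨0, hn⟩ : Fin n)).val) ≤ wt n c' := by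
    unfold wt
    exact Finset.single_le_sum (f := fun i : Fin n => c' i * 2 ^ (n - 1 - i.val))
      (fun i _ => Nat.zero_le _) (Finset.mem_univ _)
  have h3 := wt_rtg hr
  omega

lemma nsolvable_mono {V : Type*} {G : SimpleGraph V} {c : V → ℕ} {r : V} {t t' : ℕ}
    (h : t ≤ t') (hs : NSolvable G c r t') : NSolvable G c r t := by
  obtain ⟨c', h1, h2⟩ := hs
  exact ⟨c', h1, h.trans h2⟩

lemma sum_range_two_pow (m : ℕ) : ∑ i ∈ Finset.range m, 2 ^ i = 2 ^ m - 1 := by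
  induction m with
  | zero => simp
  | succ k ih =>
    rw [Finset.sum_range_succ, ih, pow_succ]
    have : 1 ≤ 2 ^ k := Nat.one_le_two_pow
    omega

lemma sum_Ico_two_pow {a : ℕ} (h : a ≤ n) :
    ∑ i ∈ Finset.Ico a n, 2 ^ (n - 1 - i) = 2 ^ (n - a) - 1 := by
  rw [Finset.sum_Ico_eq_sum_range]
  have h1 : ∀ j ∈ Finset.range (n - a), 2 ^ (n - 1 - (a + j)) = 2 ^ ((n - a) - 1 - j) := by
    intro j hj; rw [Finset.mem_range] at hj; congr 1; omega
  rw [Finset.sum_congr rfl h1, Finset.sum_range_reflect (fun j => 2 ^ j) (n - a),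
    sum_range_two_pow]

lemma two_pow_add_two_pow (a b : ℕ) : 2 ^ a + 2 ^ b ≤ 2 ^ (a + b) + 1 := by
  have h1 : 1 ≤ 2 ^ a := Nat.one_le_two_pow
  have h2 : 1 ≤ 2 ^ b := Nat.one_le_two_pow
  have h3 : 2 ^ (a + b) = 2 ^ a * 2 ^ b := pow_add 2 a b
  nlinarith

end Part2

namespace Part3
open Stmt17 Part2

variable {n : ℕ}

lemma mem_pebbling (hn : 1 ≤ n) (k : ℕ) (hk : 2 ^ (n - 1) ≤ k) :
    ∀ c : Fin n → ℕ, (∑ v, c v) = k → ∀ r, Solvable (pathGraph n) c r := by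
  intro c hc r
  refine nsolvable_mono ?_ (path_collect c r)
  by_contra hcon
  push_neg at hcon
  have h00 := Nat.lt_one_iff.mp hcon
  have hL := (Nat.add_eq_zero.mp h00).1
  have hR := (Nat.add_eq_zero.mp h00).2
  have hSL : (∑ i ∈ Finset.range (r.val + 1), dd n c i * 2 ^ i) < 2 ^ r.val := by
    rw [Nat.div_eq_zero_iff] at hL; exact hL.resolve_left (by positivity)
  have hSR : (∑ i ∈ Finset.Ico (r.val + 1) n, dd n c i * 2 ^ (n - 1 - i))
      < 2 ^ (n - 1 - r.val) := by
    rw [Nat.div_eq_zero_iff] at hR; exact hR.resolve_left (by positivity)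
  clear hcon h00
  have hmL : (∑ i ∈ Finset.range (r.val + 1), dd n c i)
      ≤ ∑ i ∈ Finset.range (r.val + 1), dd n c i * 2 ^ i :=
    Finset.sum_le_sum fun i _ => Nat.le_mul_of_pos_right _ (by positivity)
  have hmR : (∑ i ∈ Finset.Ico (r.val + 1) n, dd n c i)
      ≤ ∑ i ∈ Finset.Ico (r.val + 1) n, dd n c i * 2 ^ (n - 1 - i) :=
    Finset.sum_le_sum fun i _ => Nat.le_mul_of_pos_right _ (by positivity)
  have hsplit : (∑ i ∈ Finset.range (r.val + 1), dd n c i)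
      + (∑ i ∈ Finset.Ico (r.val + 1) n, dd n c i) = ∑ i ∈ Finset.range n, dd n c i :=
    Finset.sum_range_add_sum_Ico _ r.isLt
  have htot : ∑ i ∈ Finset.range n, dd n c i = k := by rw [← sum_dd, hc]
  have hpow : 2 ^ r.val + 2 ^ (n - 1 - r.val) ≤ 2 ^ (n - 1) + 1 := by
    have := two_pow_add_two_pow r.val (n - 1 - r.val)
    have he : r.val + (n - 1 - r.val) = n - 1 := by have := r.isLt; omega
    rw [he] at this
    exact this
  omega

lemma pebbling_eq (hn : 2 ≤ n) : pebblingNumber (pathGraph n) = 2 ^ (n - 1) := by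
  have hmem : 2 ^ (n - 1) ∈ {k | ∀ c : Fin n → ℕ, (∑ v, c v) = k →
      ∀ r, Solvable (pathGraph n) c r} :=
    fun c hc r => mem_pebbling (by omega) _ le_rfl c hc r
  refine le_antisymm (Nat.sInf_le hmem) (le_csInf ⟨_, hmem⟩ ?_)
  intro k hk
  by_contra hlt
  push_neg at hlt
  set a : Fin n := ⟨n - 1, by omega⟩ with ha
  set c : Fin n → ℕ := fun i => if i = a then k else 0 with hcdef
  have hsum : ∑ v, c v = k := by
    rw [hcdef]
    simp [Finset.sum_ite_eq']
  have hsol := hk c hsum ⟨0, by omega⟩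
  have hwt : wt n c = k := by
    unfold wt
    rw [hcdef]
    simp only [ite_mul, zero_mul]
    rw [Finset.sum_ite_eq' Finset.univ a (fun i => k * 2 ^ (n - 1 - i.val))]
    simp [ha]
  refine not_nsolvable (by omega) c 1 ?_ hsol
  rw [hwt]; omega

end Part3

namespace Part4
open Stmt17 Part2 Part3

variable {n : ℕ}

lemma key_ineq {d p : ℕ} (hd : 1 ≤ d) (hp : 1 ≤ p) : d + (p - 1) ≤ d * p := by
  have h1 : d * p = d * (p - 1) + d := by
    conv_lhs => rw [← Nat.sub_add_cancel hp]
    rw [Nat.mul_add, Nat.mul_one]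
  have h2 : p - 1 ≤ d * (p - 1) := Nat.le_mul_of_pos_left _ hd
  omega

lemma mem_two (hn : 2 ≤ n) : ∀ (r : Fin n) (c : Fin n → ℕ),
    2 ^ (n - 1) + n ≤ ∑ v, c v →
    (Finset.univ.filter fun v => 1 ≤ c v).card = n - 1 →
    NSolvable (pathGraph n) c r 2 := by
  intro r c hsum hcard
  have hcompl : (Finset.univ.filter fun v => ¬ 1 ≤ c v).card = 1 := by
    have h := Finset.card_filter_add_card_filter_not
      (s := (Finset.univ : Finset (Fin n))) (p := fun v => 1 ≤ c v)
    rw [Finset.card_univ, Fintype.card_fin, hcard] at h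
    omega
  obtain ⟨e, he⟩ := Finset.card_eq_one.mp hcompl
  have hce : c e = 0 := by
    have h1 : e ∈ Finset.univ.filter fun v => ¬ 1 ≤ c v := he ▸ Finset.mem_singleton_self e
    simp only [Finset.mem_filter] at h1
    omega
  have hpos : ∀ v : Fin n, v ≠ e → 1 ≤ c v := by
    intro v hv
    by_contra hb
    have h1 : v ∈ Finset.univ.filter fun v => ¬ 1 ≤ c v := by
      simp only [Finset.mem_filter]
      exact ⟨Finset.mem_univ _, hb⟩
    rw [he, Finset.mem_singleton] at h1
    exact hv h1
  refine nsolvable_mono ?_ (path_collect c r)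
  set rv := r.val with hrv
  have hrlt : rv < n := r.isLt
  set D := n - 1 - rv with hD
  set SL := ∑ i ∈ Finset.range (rv + 1), dd n c i * 2 ^ i with hSL
  set SR := ∑ i ∈ Finset.Ico (rv + 1) n, dd n c i * 2 ^ (n - 1 - i) with hSR
  by_contra hcon
  push_neg at hcon
  have hpowL : (0:ℕ) < 2 ^ rv := by positivity
  have hpowR : (0:ℕ) < 2 ^ D := by positivity
  have hSLlt : SL < 2 * 2 ^ rv :=
    (Nat.div_lt_iff_lt_mul hpowL).mp (lt_of_le_of_lt (Nat.le_add_right _ _) hcon)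
  have hSRlt : SR < 2 * 2 ^ D :=
    (Nat.div_lt_iff_lt_mul hpowR).mp (lt_of_le_of_lt (Nat.le_add_left _ _) hcon)
  have hor : SL / 2 ^ rv = 0 ∨ SR / 2 ^ D = 0 := by
    rcases Nat.eq_zero_or_pos (SL / 2 ^ rv) with h | h
    · exact Or.inl h
    rcases Nat.eq_zero_or_pos (SR / 2 ^ D) with h' | h'
    · exact Or.inr h'
    exact absurd hcon (not_lt.mpr (by omega))
  -- termwise bounds
  set WL := ∑ i ∈ Finset.range (rv + 1), (if i = e.val then 0 else 2 ^ i - 1) with hWL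
  set WR := ∑ i ∈ Finset.Ico (rv + 1) n, (if i = e.val then 0 else 2 ^ (n - 1 - i) - 1) with hWR
  have hmWL : (∑ i ∈ Finset.range (rv + 1), dd n c i) + WL ≤ SL := by
    rw [hWL, hSL, ← Finset.sum_add_distrib]
    refine Finset.sum_le_sum fun i hi => ?_
    rw [Finset.mem_range] at hi
    have hi2 : i < n := by omega
    have hddi : dd n c i = c ⟨i, hi2⟩ := by simp [dd, hi2]
    by_cases hie : i = e.val
    · have heq : (⟨i, hi2⟩ : Fin n) = e := Fin.ext hie
      rw [hddi, heq, hce, hie]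
      simp
    · have h1 : 1 ≤ c ⟨i, hi2⟩ := hpos _ (by simp [Fin.ext_iff, hie])
      rw [hddi, if_neg hie]
      exact key_ineq h1 Nat.one_le_two_pow
  have hmWR : (∑ i ∈ Finset.Ico (rv + 1) n, dd n c i) + WR ≤ SR := by
    rw [hWR, hSR, ← Finset.sum_add_distrib]
    refine Finset.sum_le_sum fun i hi => ?_
    rw [Finset.mem_Ico] at hi
    have hi2 : i < n := hi.2
    have hddi : dd n c i = c ⟨i, hi2⟩ := by simp [dd, hi2]
    by_cases hie : i = e.val
    · have heq : (⟨i, hi2⟩ : Fin n) = e := Fin.ext hie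
      rw [hddi, heq, hce, hie]
      simp
    · have h1 : 1 ≤ c ⟨i, hi2⟩ := hpos _ (by simp [Fin.ext_iff, hie])
      rw [hddi, if_neg hie]
      exact key_ineq h1 Nat.one_le_two_pow
  -- splitting equations
  have hWLe : WL + (if e.val < rv + 1 then 2 ^ e.val - 1 else 0)
      = ∑ i ∈ Finset.range (rv + 1), (2 ^ i - 1) := by
    have h1 : ∀ i ∈ Finset.range (rv + 1), (2 ^ i - 1 : ℕ)
        = (if i = e.val then 0 else 2 ^ i - 1) + (if i = e.val then 2 ^ i - 1 else 0) := by
      intro i _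
      by_cases h : i = e.val <;> simp [h]
    rw [Finset.sum_congr rfl h1, Finset.sum_add_distrib,
      Finset.sum_ite_eq' (Finset.range (rv + 1)) e.val (fun i => 2 ^ i - 1), ← hWL]
    simp [Finset.mem_range]
  have hWRe : WR + (if rv + 1 ≤ e.val then 2 ^ (n - 1 - e.val) - 1 else 0)
      = ∑ i ∈ Finset.Ico (rv + 1) n, (2 ^ (n - 1 - i) - 1) := by
    have h1 : ∀ i ∈ Finset.Ico (rv + 1) n, (2 ^ (n - 1 - i) - 1 : ℕ)
        = (if i = e.val then 0 else 2 ^ (n - 1 - i) - 1)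
          + (if i = e.val then 2 ^ (n - 1 - i) - 1 else 0) := by
      intro i _
      by_cases h : i = e.val <;> simp [h]
    rw [Finset.sum_congr rfl h1, Finset.sum_add_distrib,
      Finset.sum_ite_eq' (Finset.Ico (rv + 1) n) e.val (fun i => 2 ^ (n - 1 - i) - 1), ← hWR]
    have hel : e.val < n := e.isLt
    by_cases h2 : rv + 1 ≤ e.val
    · simp [Finset.mem_Ico, h2, hel]
    · simp [Finset.mem_Ico, h2]
  -- geometric sum identities
  have hGL : (∑ i ∈ Finset.range (rv + 1), (2 ^ i - 1)) + (rv + 1) = 2 ^ (rv + 1) - 1 := by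
    have h1 : ∀ i ∈ Finset.range (rv + 1), (2 ^ i - 1 : ℕ) + 1 = 2 ^ i := fun i _ =>
      Nat.sub_add_cancel Nat.one_le_two_pow
    calc (∑ i ∈ Finset.range (rv + 1), (2 ^ i - 1)) + (rv + 1)
        = ∑ i ∈ Finset.range (rv + 1), ((2 ^ i - 1) + 1) := by
          rw [Finset.sum_add_distrib]
          simp
      _ = ∑ i ∈ Finset.range (rv + 1), 2 ^ i := Finset.sum_congr rfl h1
      _ = 2 ^ (rv + 1) - 1 := sum_range_two_pow _
  have hGR : (∑ i ∈ Finset.Ico (rv + 1) n, (2 ^ (n - 1 - i) - 1)) + (n - (rv + 1))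
      = 2 ^ D - 1 := by
    have h1 : ∀ i ∈ Finset.Ico (rv + 1) n, (2 ^ (n - 1 - i) - 1 : ℕ) + 1 = 2 ^ (n - 1 - i) :=
      fun i _ => Nat.sub_add_cancel Nat.one_le_two_pow
    have hcd : n - (rv + 1) = D := by omega
    calc (∑ i ∈ Finset.Ico (rv + 1) n, (2 ^ (n - 1 - i) - 1)) + (n - (rv + 1))
        = ∑ i ∈ Finset.Ico (rv + 1) n, ((2 ^ (n - 1 - i) - 1) + 1) := by
          rw [Finset.sum_add_distrib]
          simp [Nat.card_Ico]
      _ = ∑ i ∈ Finset.Ico (rv + 1) n, 2 ^ (n - 1 - i) := Finset.sum_congr rfl h1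
      _ = 2 ^ (n - (rv + 1)) - 1 := sum_Ico_two_pow (by omega)
      _ = 2 ^ D - 1 := by rw [hcd]
  -- totals
  have hsplit : (∑ i ∈ Finset.range (rv + 1), dd n c i)
      + (∑ i ∈ Finset.Ico (rv + 1) n, dd n c i) = ∑ i ∈ Finset.range n, dd n c i :=
    Finset.sum_range_add_sum_Ico _ hrlt
  have htot : 2 ^ (n - 1) + n ≤ ∑ i ∈ Finset.range n, dd n c i := by rw [← sum_dd]; exact hsum
  -- power facts
  have hp1 : (2:ℕ) ^ (rv + 1) = 2 * 2 ^ rv := by rw [pow_succ]; ring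
  have hp2 : (2:ℕ) ^ rv ≤ 2 ^ (n - 1) := Nat.pow_le_pow_right (by norm_num) (by omega)
  have hp3 : (2:ℕ) ^ D ≤ 2 ^ (n - 1) := Nat.pow_le_pow_right (by norm_num) (by omega)
  have hp4 : (1:ℕ) ≤ 2 ^ rv := Nat.one_le_two_pow
  have hp5 : (1:ℕ) ≤ 2 ^ D := Nat.one_le_two_pow
  rcases le_or_gt e.val rv with hcase | hcase
  · -- e on the left side
    have hE : (2:ℕ) ^ e.val ≤ 2 ^ rv := Nat.pow_le_pow_right (by norm_num) hcase
    have hE1 : (1:ℕ) ≤ 2 ^ e.val := Nat.one_le_two_pow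
    rw [if_pos (by omega : e.val < rv + 1)] at hWLe
    rw [if_neg (by omega : ¬ rv + 1 ≤ e.val)] at hWRe
    rcases hor with h0 | h0
    · have hSL0 : SL < 2 ^ rv := by rw [Nat.div_eq_zero_iff] at h0; exact h0.resolve_left hpowL.ne'
      omega
    · have hSR0 : SR < 2 ^ D := by rw [Nat.div_eq_zero_iff] at h0; exact h0.resolve_left hpowR.ne'
      omega
  · -- e on the right side
    have heln : e.val < n := e.isLt
    have hD1 : 1 ≤ D := by omega
    have hEr : (2:ℕ) ^ (n - 1 - e.val) ≤ 2 ^ (D - 1) :=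
      Nat.pow_le_pow_right (by norm_num) (by omega)
    have hpD : (2:ℕ) ^ D = 2 * 2 ^ (D - 1) := by
      conv_lhs => rw [show D = (D - 1) + 1 by omega]
      rw [pow_succ]; ring
    have hpD2 : (2:ℕ) ^ (D - 1) ≤ 2 ^ (n - 1) := Nat.pow_le_pow_right (by norm_num) (by omega)
    rw [if_neg (by omega : ¬ e.val < rv + 1)] at hWLe
    rw [if_pos (by omega : rv + 1 ≤ e.val)] at hWRe
    have hcr : 1 ≤ c r := hpos r (by simp [Fin.ext_iff]; omega)
    have hSLge : 2 ^ rv ≤ SL := by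
      have hdd : dd n c rv = c r := by
        have : (⟨rv, hrlt⟩ : Fin n) = r := Fin.ext hrv.symm
        simp [dd, hrlt, this]
      have h1 : dd n c rv * 2 ^ rv ≤ SL := by
        rw [hSL]
        exact Finset.single_le_sum (f := fun i => dd n c i * 2 ^ i)
          (fun i _ => Nat.zero_le _) (Finset.self_mem_range_succ rv)
      have h2 : 2 ^ rv ≤ dd n c rv * 2 ^ rv := Nat.le_mul_of_pos_left _ (by omega)
      omega
    have hL1 : 1 ≤ SL / 2 ^ rv := (Nat.one_le_div_iff hpowL).mpr hSLge
    have hR0 : SR / 2 ^ D < 1 := by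
      by_contra h
      push_neg at h
      exact absurd hcon (not_lt.mpr (add_le_add hL1 h))
    rw [Nat.lt_one_iff] at hR0
    have hSR0 : SR < 2 ^ D := by rw [Nat.div_eq_zero_iff] at hR0; exact hR0.resolve_left hpowR.ne'
    omega

end Part4

namespace Part5
open Stmt17 Part2 Part3 Part4

variable {n : ℕ}

lemma wt_eq (c : Fin n → ℕ) : wt n c = ∑ i ∈ Finset.range n, dd n c i * 2 ^ (n - 1 - i) := by
  rw [wt, Finset.sum_range fun i => dd n c i * 2 ^ (n - 1 - i)]
  refine Finset.sum_congr rfl fun i _ => ?_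
  simp [dd, i.isLt]

lemma two_eq (hn : 2 ≤ n) : twoPebblingNumber (pathGraph n) (n - 1) = 2 ^ (n - 1) + n := by
  have hmem : 2 ^ (n - 1) + n ∈ {m | ∀ (r : Fin n) (c : Fin n → ℕ), m ≤ ∑ v, c v →
      (Finset.univ.filter fun v => 1 ≤ c v).card = n - 1 → NSolvable (pathGraph n) c r 2} :=
    fun r c h1 h2 => mem_two hn r c h1 h2
  refine le_antisymm (Nat.sInf_le hmem) (le_csInf ⟨_, hmem⟩ ?_)
  intro m hm
  by_contra hlt
  push_neg at hlt
  obtain ⟨k, rfl⟩ : ∃ k, n = k + 2 := ⟨n - 2, by omega⟩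
  set z : Fin (k + 2) := ⟨0, by omega⟩ with hz
  set cc : Fin (k + 2) → ℕ :=
    fun i => if i.val = 0 then 0 else if i.val = k + 1 then 2 ^ (k + 1) + 1 else 1 with hcc
  have hd : ∀ i, (h : i < k + 2) →
      dd (k + 2) cc i = if i = 0 then 0 else if i = k + 1 then 2 ^ (k + 1) + 1 else 1 := by
    intro i h
    simp [dd, h, hcc]
  have hsum : ∑ v, cc v = 2 ^ (k + 1) + (k + 1) := by
    rw [sum_dd, Finset.sum_range_succ, Finset.sum_range_succ']
    have h1 : ∀ i ∈ Finset.range k, dd (k + 2) cc (i + 1) = 1 := by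
      intro i hi
      rw [Finset.mem_range] at hi
      rw [hd (i + 1) (by omega), if_neg (by omega : ¬ i + 1 = 0),
        if_neg (by omega : ¬ i + 1 = k + 1)]
    rw [Finset.sum_congr rfl h1, hd 0 (by omega), hd (k + 1) (by omega),
      if_pos rfl, if_neg (by omega : ¬ k + 1 = 0), if_pos rfl]
    simp only [Finset.sum_const, Finset.card_range, smul_eq_mul, mul_one]
    omega
  have hcard : (Finset.univ.filter fun v => 1 ≤ cc v).card = k + 2 - 1 := by
    have hfe : (Finset.univ.filter fun v => 1 ≤ cc v) = Finset.univ.erase z := by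
      ext v
      rw [Finset.mem_filter, Finset.mem_erase]
      constructor
      · rintro ⟨-, hv⟩
        refine ⟨?_, Finset.mem_univ _⟩
        rintro rfl
        simp [hcc, hz] at hv
      · rintro ⟨hv, -⟩
        refine ⟨Finset.mem_univ _, ?_⟩
        have hv0 : v.val ≠ 0 := fun h => hv (Fin.ext h)
        simp only [hcc, if_neg hv0]
        by_cases h2 : v.val = k + 1 <;> simp [h2]
    rw [hfe, Finset.card_erase_of_mem (Finset.mem_univ _), Finset.card_univ, Fintype.card_fin]
  have hwt : wt (k + 2) cc = 2 ^ (k + 2) - 1 := by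
    rw [wt_eq]
    have hexp : ∀ i ∈ Finset.range (k + 2),
        dd (k + 2) cc i * 2 ^ (k + 2 - 1 - i) = dd (k + 2) cc i * 2 ^ (k + 1 - i) := by
      intro i _
      congr 2
    rw [Finset.sum_congr rfl hexp, Finset.sum_range_succ, Finset.sum_range_succ']
    have h1 : ∀ i ∈ Finset.range k,
        dd (k + 2) cc (i + 1) * 2 ^ (k + 1 - (i + 1)) = 2 ^ (k - i) := by
      intro i hi
      rw [Finset.mem_range] at hi
      rw [hd (i + 1) (by omega), if_neg (by omega : ¬ i + 1 = 0),
        if_neg (by omega : ¬ i + 1 = k + 1), one_mul]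
      congr 1
      omega
    rw [Finset.sum_congr rfl h1, hd 0 (by omega), hd (k + 1) (by omega),
      if_pos rfl, if_neg (by omega : ¬ k + 1 = 0), if_pos rfl]
    have h2 : ∑ i ∈ Finset.range k, 2 ^ (k - i) = 2 * (2 ^ k - 1) := by
      have h3 : ∀ j ∈ Finset.range k, 2 ^ (k - (k - 1 - j)) = 2 ^ (j + 1) := by
        intro j hj
        rw [Finset.mem_range] at hj
        congr 1
        omega
      calc ∑ i ∈ Finset.range k, 2 ^ (k - i)
          = ∑ j ∈ Finset.range k, 2 ^ (k - (k - 1 - j)) :=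
            (Finset.sum_range_reflect (fun i => 2 ^ (k - i)) k).symm
        _ = ∑ j ∈ Finset.range k, 2 ^ (j + 1) := Finset.sum_congr rfl h3
        _ = ∑ j ∈ Finset.range k, 2 ^ j * 2 := by
            refine Finset.sum_congr rfl fun j _ => ?_
            rw [pow_succ]
        _ = (2 ^ k - 1) * 2 := by rw [← Finset.sum_mul, sum_range_two_pow]
        _ = 2 * (2 ^ k - 1) := by ring
    rw [h2]
    have h4 : (1:ℕ) ≤ 2 ^ k := Nat.one_le_two_pow
    have h5 : (2:ℕ) ^ (k + 2) = 2 * (2 * 2 ^ k) := by rw [pow_succ, pow_succ]; ring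
    have h6 : (2:ℕ) ^ (k + 1) = 2 * 2 ^ k := by rw [pow_succ]; ring
    simp only [Nat.sub_self, pow_zero, mul_one, zero_mul]
    omega
  rw [show k + 2 - 1 = k + 1 from by omega] at hlt
  have hsol := hm z cc (by omega) hcard
  refine not_nsolvable (by omega) cc 2 ?_ hsol
  rw [hwt, show k + 2 - 1 = k + 1 from by omega]
  have h4 : (1:ℕ) ≤ 2 ^ (k + 1) := Nat.one_le_two_pow
  have h5 : (2:ℕ) ^ (k + 2) = 2 * 2 ^ (k + 1) := by rw [pow_succ]; ring
  omega

theorem stmt17' (hn : 2 ≤ n) :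
    twoPebblingNumber (SimpleGraph.pathGraph n) (n - 1) = 2 ^ (n - 1) + n ∧
    twoPebblingNumber (SimpleGraph.pathGraph n) (n - 1)
      ≤ 2 * pebblingNumber (SimpleGraph.pathGraph n) ∧
    2 * pebblingNumber (SimpleGraph.pathGraph n) = 2 ^ n := by
  have hpow : 2 * 2 ^ (n - 1) = 2 ^ n := by
    conv_rhs => rw [show n = (n - 1) + 1 by omega]
    rw [pow_succ]
    ring
  have hnle : n ≤ 2 ^ (n - 1) := by
    have := @Nat.lt_two_pow_self (n - 1)
    omega
  refine ⟨two_eq hn, ?_, ?_⟩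
  · rw [two_eq hn, pebbling_eq hn]
    omega
  · rw [pebbling_eq hn, hpow]

end Part5


/-- for the path `P_n` on `n ≥ 2` vertices,
`π₂(P_n, n - 1) = 2^{n-1} + n`, which is at most `2·π(P_n) = 2^n`. -/
theorem stmt17 (n : ℕ) (hn : 2 ≤ n) :
    twoPebblingNumber (SimpleGraph.pathGraph n) (n - 1) = 2 ^ (n - 1) + n ∧
    twoPebblingNumber (SimpleGraph.pathGraph n) (n - 1)
      ≤ 2 * pebblingNumber (SimpleGraph.pathGraph n) ∧
    2 * pebblingNumber (SimpleGraph.pathGraph n) = 2 ^ n :=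
  Part5.stmt17' hn
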